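/- arXiv:1704.05596 — 5 statements merged into one kernel-verified Lean document; each statement's English description precedes it below -/
import Mathlib

section
/- Let f_1,…,f_T : ℝ^d → ℝ be convex functions and let u_1,…,u_{T+1} ∈ ℝ^d satisfy u_{t+1} = u_t − (1/t)∇_t for 1 ≤ t ≤ T, where each ∇_t is a subgradient of f_t at u_t. Suppose ‖u_t‖ ≤ G1 for all 1 ≤ t ≤ T+1 and ‖∇_t‖ ≤ G2 for all 1 ≤ t ≤ T. Then for every θ ∈ ℝ^d, (1/T)·Σ_{t=1}^T f_t(u_t) ≤ (1/T)·Σ_{t=1}^T f_t(θ) + G2(G1 + ‖θ‖) + (1/(2T))·G2²·(1 + ln T). -/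
open RealInnerProductSpace Finset

/-- Regret bound for SGD with step size `η_t = 1/t` on a sequence of convex
functions, under boundedness of the iterates and of the subgradients. -/
theorem sgd_average_regret_bound
    (d T : ℕ) (hT : 1 ≤ T)
    (f : ℕ → EuclideanSpace ℝ (Fin d) → ℝ)
    (u g : ℕ → EuclideanSpace ℝ (Fin d)) (G1 G2 : ℝ)
    (hconv : ∀ t, 1 ≤ t → t ≤ T →
      ConvexOn ℝ (Set.univ : Set (EuclideanSpace ℝ (Fin d))) (f t))
    (hsub : ∀ t, 1 ≤ t → t ≤ T →
      ∀ x : EuclideanSpace ℝ (Fin d), f t x ≥ f t (u t) + ⟪g t, x - u t⟫)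
    (hstep : ∀ t, 1 ≤ t → t ≤ T → u (t + 1) = u t - (1 / (t : ℝ)) • g t)
    (hu : ∀ t, 1 ≤ t → t ≤ T + 1 → ‖u t‖ ≤ G1)
    (hg : ∀ t, 1 ≤ t → t ≤ T → ‖g t‖ ≤ G2)
    (θ : EuclideanSpace ℝ (Fin d)) :
    (1 / (T : ℝ)) * ∑ t ∈ Finset.Icc 1 T, f t (u t)
      ≤ (1 / (T : ℝ)) * ∑ t ∈ Finset.Icc 1 T, f t θ
        + G2 * (G1 + ‖θ‖) + (1 / (2 * (T : ℝ))) * G2 ^ 2 * (1 + Real.log T) := by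
  have hTpos : (0 : ℝ) < T := by exact_mod_cast hT
  have hG2 : 0 ≤ G2 := le_trans (norm_nonneg (g 1)) (hg 1 le_rfl hT)
  have hG1 : 0 ≤ G1 := le_trans (norm_nonneg (u 1)) (hu 1 le_rfl (by omega))
  -- per-step bound
  have key : ∀ t ∈ Finset.Icc 1 T, f t (u t) ≤ f t θ + G2 * (G1 + ‖θ‖) := by
    intro t ht
    rw [Finset.mem_Icc] at ht
    have h1 := hsub t ht.1 ht.2 θ
    have h2 : ⟪g t, θ - u t⟫ ≥ -(G2 * (G1 + ‖θ‖)) := by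
      have hcs : |⟪g t, θ - u t⟫| ≤ ‖g t‖ * ‖θ - u t‖ := abs_real_inner_le_norm _ _
      have hb : ‖g t‖ * ‖θ - u t‖ ≤ G2 * (G1 + ‖θ‖) := by
        apply mul_le_mul (hg t ht.1 ht.2) ?_ (norm_nonneg _) hG2
        calc ‖θ - u t‖ ≤ ‖θ‖ + ‖u t‖ := norm_sub_le _ _
          _ ≤ G1 + ‖θ‖ := by
            have := hu t ht.1 (by omega); linarith
      have := (abs_le.mp hcs).1
      linarith [neg_le_neg hb]
    linarith
  have hsum : ∑ t ∈ Finset.Icc 1 T, f t (u t)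
      ≤ ∑ t ∈ Finset.Icc 1 T, f t θ + (T : ℝ) * (G2 * (G1 + ‖θ‖)) := by
    have := Finset.sum_le_sum key
    rw [Finset.sum_add_distrib, Finset.sum_const] at this
    simpa [Nat.card_Icc, nsmul_eq_mul] using this
  have hlog : 0 ≤ (1 / (2 * (T : ℝ))) * G2 ^ 2 * (1 + Real.log T) := by
    apply mul_nonneg (mul_nonneg (by positivity) (by positivity))
    have : (0:ℝ) ≤ Real.log T := Real.log_nonneg (by exact_mod_cast hT)
    linarith
  have h3 : (1 / (T : ℝ)) * ∑ t ∈ Finset.Icc 1 T, f t (u t)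
      ≤ (1 / (T : ℝ)) * (∑ t ∈ Finset.Icc 1 T, f t θ + (T : ℝ) * (G2 * (G1 + ‖θ‖))) :=
    mul_le_mul_of_nonneg_left hsum (by positivity)
  have h4 : (1 / (T : ℝ)) * (∑ t ∈ Finset.Icc 1 T, f t θ + (T : ℝ) * (G2 * (G1 + ‖θ‖)))
      = (1 / (T : ℝ)) * ∑ t ∈ Finset.Icc 1 T, f t θ + G2 * (G1 + ‖θ‖) := by
    field_simp
  linarith
end

section
/- Let f_1, f_2, … : ℝ^d → ℝ be convex functions and let (u_t)_{t≥1} in ℝ^d satisfy u_{t+1} = u_t − (1/t)∇_t for all t ≥ 1, where each ∇_t is a subgradient of f_t at u_t and ‖∇_t‖ ≤ G2 for all t. Suppose the sequence (u_t) converges in ℝ^d. Then for every θ ∈ ℝ^d and every ε > 0, there exists T0 such that for all T ≥ T0, (1/T)·Σ_{t=1}^T f_t(u_t) ≤ (1/T)·Σ_{t=1}^T f_t(θ) + ε. -/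
open RealInnerProductSpace Finset Filter

open Topology

/-!
The subgradient inequality bounds `f t (u t) - f t θ` by `⟪g t, u t - θ⟫`, and expanding
`‖u (t + 1) - θ‖²` along the step `u (t + 1) = u t - g t / t` rewrites this as
`(t / 2) (a t - a (t + 1)) + ‖g t‖² / (2 t)` with `a t = ‖u t - θ‖²`. Summation by parts turns
the average of the first terms into `(1 / T) ∑ a t - a (T + 1)`, which tends to `0` by Cesàro
because `a` converges; the second terms are `O(1 / t)`, so their average tends to `0` as well.
-/

theorem Filter.Tendsto.cesaro_Icc {a : ℕ → ℝ} {l : ℝ} (h : Tendsto a atTop (𝓝 l)) :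
    Tendsto (fun T : ℕ => (1 / (T : ℝ)) * ∑ t ∈ Icc 1 T, a t) atTop (𝓝 l) := by
  have hsum (T : ℕ) : ∑ t ∈ Icc 1 T, a t = ∑ i ∈ range T, a (i + 1) := by
    rw [range_eq_Ico, sum_Ico_add' a 0 T 1, zero_add, Ico_add_one_right_eq_Icc]
  simpa only [one_div, hsum, Function.comp_def] using
    (h.comp (tendsto_add_atTop_nat 1)).cesaro

theorem tendsto_div_natCast_of_norm_le {b : ℕ → ℝ} {C : ℝ} (hb : ∀ t, 1 ≤ t → ‖b t‖ ≤ C) :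
    Tendsto (fun t : ℕ => b t / t) atTop (𝓝 0) := by
  have hbdd : IsBoundedUnder (· ≤ ·) atTop (norm ∘ b) :=
    isBoundedUnder_of_eventually_le (eventually_atTop.2 ⟨1, hb⟩)
  simpa only [div_eq_inv_mul] using
    (tendsto_inv_atTop_nhds_zero_nat (𝕜 := ℝ)).zero_mul_isBoundedUnder_le hbdd

theorem sum_Icc_one_mul_sub_succ {R : Type*} [CommRing R] (a : ℕ → R) (T : ℕ) :
    ∑ t ∈ Icc 1 T, (t : R) * (a t - a (t + 1)) = ∑ t ∈ Icc 1 T, a t - T * a (T + 1) := by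
  induction T with
  | zero => simp
  | succ T ih =>
    rw [sum_Icc_succ_top (by omega), sum_Icc_succ_top (by omega), ih]
    push_cast
    ring

theorem tendsto_average_mul_sub_succ {a : ℕ → ℝ} {l : ℝ} (h : Tendsto a atTop (𝓝 l)) :
    Tendsto (fun T : ℕ => (1 / (T : ℝ)) * ∑ t ∈ Icc 1 T, (t : ℝ) * (a t - a (t + 1)))
      atTop (𝓝 0) := by
  have hlim : Tendsto (fun T : ℕ => (1 / (T : ℝ)) * ∑ t ∈ Icc 1 T, a t - a (T + 1))
      atTop (𝓝 (l - l)) :=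
    h.cesaro_Icc.sub (h.comp (tendsto_add_atTop_nat 1))
  rw [sub_self] at hlim
  refine hlim.congr' ?_
  filter_upwards [eventually_ge_atTop 1] with T hT
  have hT : (T : ℝ) ≠ 0 := by positivity
  rw [sum_Icc_one_mul_sub_succ]
  field_simp

theorem real_inner_eq_sq_norm_sub_smul {E : Type*} [NormedAddCommGroup E]
    [InnerProductSpace ℝ E]
    (x g : E) {η : ℝ} (hη : η ≠ 0) :
    ⟪g, x⟫ = (η⁻¹ * (‖x‖ ^ 2 - ‖x - η • g‖ ^ 2) + η * ‖g‖ ^ 2) / 2 := by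
  rw [norm_sub_sq_real, real_inner_smul_right, norm_smul, mul_pow, Real.norm_eq_abs, sq_abs,
    real_inner_comm]
  field_simp
  ring

theorem tendsto_average_inner_sub_of_sgd {E : Type*} [NormedAddCommGroup E]
    [InnerProductSpace ℝ E]
    {u g : ℕ → E} {G : ℝ} {L : E}
    (hstep : ∀ t, 1 ≤ t → u (t + 1) = u t - (1 / (t : ℝ)) • g t)
    (hg : ∀ t, 1 ≤ t → ‖g t‖ ≤ G) (hL : Tendsto u atTop (𝓝 L)) (θ : E) :
    Tendsto (fun T : ℕ => (1 / (T : ℝ)) * ∑ t ∈ Icc 1 T, ⟪g t, u t - θ⟫) atTop (𝓝 0) := by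
  set a : ℕ → ℝ := fun t => ‖u t - θ‖ ^ 2
  have hinner : ∀ t, 1 ≤ t →
      ⟪g t, u t - θ⟫ = ((t : ℝ) * (a t - a (t + 1)) + ‖g t‖ ^ 2 / t) / 2 := by
    intro t ht
    have hη : 1 / (t : ℝ) ≠ 0 := by positivity
    have hnext : u (t + 1) - θ = u t - θ - (1 / (t : ℝ)) • g t := by
      rw [hstep t ht, sub_right_comm]
    rw [real_inner_eq_sq_norm_sub_smul (u t - θ) (g t) hη, ← hnext, one_div, inv_inv,
      div_eq_inv_mul (‖g t‖ ^ 2)]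
  have ha : Tendsto a atTop (𝓝 (‖L - θ‖ ^ 2)) := ((hL.sub_const θ).norm).pow 2
  have hg2 : ∀ t, 1 ≤ t → ‖‖g t‖ ^ 2‖ ≤ G ^ 2 := fun t ht => by
    rw [norm_pow, norm_norm]
    exact pow_le_pow_left₀ (norm_nonneg _) (hg t ht) 2
  have hlim := ((tendsto_average_mul_sub_succ ha).add
    (tendsto_div_natCast_of_norm_le hg2).cesaro_Icc).div_const 2
  rw [add_zero, zero_div] at hlim
  refine hlim.congr fun T => ?_
  rw [sum_congr rfl fun t ht => hinner t (mem_Icc.1 ht).1, ← sum_div, sum_add_distrib]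
  ring

theorem sgd_average_regret_eventually_small_general
    (d : ℕ) (f : ℕ → EuclideanSpace ℝ (Fin d) → ℝ)
    (u g : ℕ → EuclideanSpace ℝ (Fin d)) (G2 : ℝ)
    (hsub : ∀ t, 1 ≤ t →
      ∀ x : EuclideanSpace ℝ (Fin d), f t x ≥ f t (u t) + ⟪g t, x - u t⟫)
    (hstep : ∀ t, 1 ≤ t → u (t + 1) = u t - (1 / (t : ℝ)) • g t)
    (hg : ∀ t, 1 ≤ t → ‖g t‖ ≤ G2)
    (hlim : ∃ L : EuclideanSpace ℝ (Fin d), Tendsto u atTop (nhds L))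
    (θ : EuclideanSpace ℝ (Fin d)) (ε : ℝ) (hε : 0 < ε) :
    ∃ T0 : ℕ, ∀ T, T0 ≤ T →
      (1 / (T : ℝ)) * ∑ t ∈ Finset.Icc 1 T, f t (u t)
        ≤ (1 / (T : ℝ)) * ∑ t ∈ Finset.Icc 1 T, f t θ + ε := by
  obtain ⟨L, hL⟩ := hlim
  have hlin : ∀ t, 1 ≤ t → f t (u t) - f t θ ≤ ⟪g t, u t - θ⟫ := fun t ht => by
    have := hsub t ht θ
    rw [← neg_sub (u t) θ, inner_neg_right] at this
    linarith
  obtain ⟨T0, hT0⟩ := eventually_atTop.1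
    ((tendsto_average_inner_sub_of_sgd hstep hg hL θ).eventually (gt_mem_nhds hε))
  refine ⟨T0, fun T hT => ?_⟩
  have hregret :
      (1 / (T : ℝ)) * ∑ t ∈ Icc 1 T, f t (u t) - (1 / (T : ℝ)) * ∑ t ∈ Icc 1 T, f t θ
        ≤ (1 / (T : ℝ)) * ∑ t ∈ Icc 1 T, ⟪g t, u t - θ⟫ := by
    rw [← mul_sub, ← sum_sub_distrib]
    gcongr with t ht
    exact hlin t (mem_Icc.1 ht).1
  linarith [hT0 T hT]

/-- If the SGD iterates (step size `1/t`, bounded subgradients) converge, then for every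
comparison point `θ` and every `ε > 0`, the average of instantaneous objectives at the
iterates eventually exceeds the average at `θ` by at most `ε`. -/
theorem sgd_average_regret_eventually_small
    (d : ℕ) (f : ℕ → EuclideanSpace ℝ (Fin d) → ℝ)
    (u g : ℕ → EuclideanSpace ℝ (Fin d)) (G2 : ℝ)
    (hconv : ∀ t, 1 ≤ t →
      ConvexOn ℝ (Set.univ : Set (EuclideanSpace ℝ (Fin d))) (f t))
    (hsub : ∀ t, 1 ≤ t →
      ∀ x : EuclideanSpace ℝ (Fin d), f t x ≥ f t (u t) + ⟪g t, x - u t⟫)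
    (hstep : ∀ t, 1 ≤ t → u (t + 1) = u t - (1 / (t : ℝ)) • g t)
    (hg : ∀ t, 1 ≤ t → ‖g t‖ ≤ G2)
    (hlim : ∃ L : EuclideanSpace ℝ (Fin d), Tendsto u atTop (nhds L))
    (θ : EuclideanSpace ℝ (Fin d)) (ε : ℝ) (hε : 0 < ε) :
    ∃ T0 : ℕ, ∀ T, T0 ≤ T →
      (1 / (T : ℝ)) * ∑ t ∈ Finset.Icc 1 T, f t (u t)
        ≤ (1 / (T : ℝ)) * ∑ t ∈ Finset.Icc 1 T, f t θ + ε :=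
  sgd_average_regret_eventually_small_general d f u g G2 hsub hstep hg hlim θ ε hε
end

section
/- Consider the SGTSVM iteration: u_{t+1} = u_t − (1/t)∇_t with ∇_t = u_t + c1⟨u_t, z_t⟩z_t + c2·χ_t·ẑ_t, where χ_t = 1 if 1 + ⟨u_t, ẑ_t⟩ > 0 and χ_t = 0 otherwise, the samples satisfy ‖z_t‖ ≤ M and ‖ẑ_t‖ ≤ M for all t ≥ 1, and c1, c2 > 0. Then there exists a constant G1 such that ‖u_t‖ ≤ G1 for all t ≥ 1, and consequently ‖∇_t‖ ≤ G1 + c1·G1·M² + c2·M for all t ≥ 1. -/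
open RealInnerProductSpace

lemma sgtsvm_aux_contract {d : ℕ} (u z : EuclideanSpace ℝ (Fin d)) (α γ : ℝ)
    (hα : 0 ≤ α) (hγ : 0 ≤ γ) (h : γ * ‖z‖ ^ 2 ≤ 2 * α) :
    ‖α • u - (γ * ⟪u, z⟫) • z‖ ≤ α * ‖u‖ := by
  have hsq : ‖α • u - (γ * ⟪u, z⟫) • z‖ ^ 2 ≤ (α * ‖u‖) ^ 2 := by
    have heq : ‖α • u - (γ * ⟪u, z⟫) • z‖ ^ 2
        = α ^ 2 * ‖u‖ ^ 2 - 2 * α * γ * ⟪u, z⟫ ^ 2 + γ ^ 2 * ⟪u, z⟫ ^ 2 * ‖z‖ ^ 2 := by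
      rw [@norm_sub_sq_real, norm_smul, norm_smul, real_inner_smul_left,
        real_inner_smul_right, Real.norm_eq_abs, Real.norm_eq_abs,
        abs_of_nonneg hα, mul_pow, mul_pow, sq_abs]
      ring
    rw [heq]
    have hkey := mul_le_mul_of_nonneg_left h (mul_nonneg hγ (sq_nonneg (⟪u, z⟫)))
    nlinarith [sq_nonneg (⟪u, z⟫)]
  have h1 : (0:ℝ) ≤ ‖α • u - (γ * ⟪u, z⟫) • z‖ := norm_nonneg _
  have h2 : (0:ℝ) ≤ α * ‖u‖ := mul_nonneg hα (norm_nonneg _)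
  nlinarith

set_option maxHeartbeats 2000000 in
/-- Lemma 3.1: for the SGTSVM iteration with samples of norm at most `M`, the iterates
`u_t` and the (sub)gradients `∇_t` are bounded: there is `G1` with `‖u_t‖ ≤ G1` for all
`t ≥ 1`, and consequently `‖∇_t‖ ≤ G1 + c1·G1·M² + c2·M` for all `t ≥ 1`. -/
theorem sgtsvm_iterates_and_gradients_bounded
    (d : ℕ) (c1 c2 M : ℝ) (hc1 : 0 < c1) (hc2 : 0 < c2)
    (z zhat : ℕ → EuclideanSpace ℝ (Fin d))
    (hz : ∀ t, 1 ≤ t → ‖z t‖ ≤ M) (hzhat : ∀ t, 1 ≤ t → ‖zhat t‖ ≤ M)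
    (u g : ℕ → EuclideanSpace ℝ (Fin d))
    (hg : ∀ t, 1 ≤ t →
      g t = u t + (c1 * ⟪u t, z t⟫) • z t
        + (if 0 < 1 + ⟪u t, zhat t⟫ then c2 else 0) • zhat t)
    (hstep : ∀ t, 1 ≤ t → u (t + 1) = u t - (1 / (t : ℝ)) • g t) :
    ∃ G1 : ℝ, (∀ t, 1 ≤ t → ‖u t‖ ≤ G1) ∧
      (∀ t, 1 ≤ t → ‖g t‖ ≤ G1 + c1 * G1 * M ^ 2 + c2 * M) := by
  have hM : 0 ≤ M := le_trans (norm_nonneg _) (hz 1 le_rfl)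
  set a : ℝ := c1 * M ^ 2 with ha
  have ha0 : 0 ≤ a := by positivity
  -- gradient bound in terms of ‖u t‖
  have hgrad : ∀ t, 1 ≤ t → ‖g t‖ ≤ (1 + a) * ‖u t‖ + c2 * M := by
    intro t ht
    rw [hg t ht]
    have h1 : ‖u t + (c1 * ⟪u t, z t⟫) • z t
        + (if 0 < 1 + ⟪u t, zhat t⟫ then c2 else 0) • zhat t‖
        ≤ ‖u t‖ + ‖(c1 * ⟪u t, z t⟫) • z t‖
          + ‖(if 0 < 1 + ⟪u t, zhat t⟫ then c2 else 0) • zhat t‖ :=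
      le_trans (norm_add_le _ _) (by gcongr; exact norm_add_le _ _)
    refine h1.trans ?_
    rw [norm_smul, norm_smul]
    have hcs := abs_real_inner_le_norm (u t) (z t)
    have hzt := hz t ht
    have hzh := hzhat t ht
    have hz0 : (0:ℝ) ≤ ‖z t‖ := norm_nonneg _
    have hzh0 : (0:ℝ) ≤ ‖zhat t‖ := norm_nonneg _
    have hu0 : (0:ℝ) ≤ ‖u t‖ := norm_nonneg _
    have hchi : ‖(if 0 < 1 + ⟪u t, zhat t⟫ then c2 else 0 : ℝ)‖ ≤ c2 := by
      split <;> simp [abs_of_nonneg hc2.le, hc2.le]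
    have hin : ‖c1 * ⟪u t, z t⟫‖ * ‖z t‖ ≤ a * ‖u t‖ := by
      rw [ha]
      have : ‖c1 * ⟪u t, z t⟫‖ = c1 * |⟪u t, z t⟫| := by
        rw [norm_mul, Real.norm_eq_abs, Real.norm_eq_abs, abs_of_nonneg hc1.le]
      rw [this]
      have h5 : |⟪u t, z t⟫| * ‖z t‖ ≤ (‖u t‖ * ‖z t‖) * ‖z t‖ :=
        mul_le_mul_of_nonneg_right hcs hz0
      have h6 : (‖u t‖ * ‖z t‖) * ‖z t‖ ≤ ‖u t‖ * M ^ 2 := by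
        nlinarith [mul_le_mul_of_nonneg_left (mul_le_mul hzt hzt hz0 hM) hu0]
      nlinarith
    nlinarith [mul_le_mul hchi hzh hzh0 hc2.le]
  -- crude per-step growth
  have hcrude : ∀ t, 1 ≤ t → ‖u (t + 1)‖ ≤ (2 + a) * ‖u t‖ + c2 * M := by
    intro t ht
    rw [hstep t ht]
    have htR : (1:ℝ) ≤ (t:ℝ) := by exact_mod_cast ht
    have h1 : ‖u t - (1 / (t:ℝ)) • g t‖ ≤ ‖u t‖ + ‖(1 / (t:ℝ)) • g t‖ :=
      norm_sub_le _ _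
    refine h1.trans ?_
    rw [norm_smul, Real.norm_eq_abs, abs_of_nonneg (by positivity)]
    have h2 : (1 / (t:ℝ)) ≤ 1 := by
      rw [div_le_one (by linarith)]; exact htR
    have h3 : (1 / (t:ℝ)) * ‖g t‖ ≤ ‖g t‖ := by
      nlinarith [norm_nonneg (g t), one_div_nonneg.mpr (le_trans zero_le_one htR)]
    have h4 := hgrad t ht
    nlinarith [norm_nonneg (u t)]
  -- exponential bound for all t (used up to N)
  set C : ℝ := ‖u 1‖ + c2 * M with hC
  have hC0 : 0 ≤ C := by positivity
  have hexp : ∀ t, 1 ≤ t → ‖u t‖ + C ≤ (2 + a) ^ t * C := by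
    intro t ht
    induction t with
    | zero => omega
    | succ n ih =>
      rcases Nat.eq_or_lt_of_le ht with h | h
      · simp only [← h]
        have h1 : (1:ℝ) ≤ 2 + a := by linarith
        have : C ≤ (2 + a) * C := by nlinarith
        have hu1 : ‖u 1‖ ≤ C := by rw [hC]; nlinarith
        calc ‖u 1‖ + C ≤ C + C := by linarith
          _ ≤ (2+a)^1 * C := by rw [pow_one]; nlinarith
      · have hn : 1 ≤ n := by omega
        have ih' := ih hn
        have hstepb := hcrude n hn
        have h1 : (1:ℝ) ≤ 2 + a := by linarith
        have hcm : c2 * M ≤ C := by rw [hC]; nlinarith [norm_nonneg (u 1)]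
        calc ‖u (n+1)‖ + C ≤ (2 + a) * ‖u n‖ + c2 * M + C := by linarith
          _ ≤ (2 + a) * (‖u n‖ + C) := by nlinarith
          _ ≤ (2 + a) * ((2+a)^n * C) := by nlinarith [norm_nonneg (u n)]
          _ = (2+a)^(n+1) * C := by ring
  -- the threshold
  set N : ℕ := ⌈a⌉₊ + 1 with hN
  have hN1 : 1 ≤ N := by omega
  -- contraction step for t ≥ N
  have hkey : ∀ t, N ≤ t → ‖u (t+1)‖ ≤ (1 - 1/(t:ℝ)) * ‖u t‖ + c2 * M / t := by
    intro t ht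
    have ht1 : 1 ≤ t := le_trans hN1 ht
    have htR : (1:ℝ) ≤ (t:ℝ) := by exact_mod_cast ht1
    have htpos : (0:ℝ) < (t:ℝ) := by linarith
    have hdecomp : u (t+1) = ((1 - 1/(t:ℝ)) • u t - ((c1/(t:ℝ)) * ⟪u t, z t⟫) • z t)
        - (((if 0 < 1 + ⟪u t, zhat t⟫ then c2 else 0) / (t:ℝ)) • zhat t) := by
      rw [hstep t ht1, hg t ht1]
      match_scalars <;> field_simp <;> ring
    rw [hdecomp]
    have h1 : ‖((1 - 1/(t:ℝ)) • u t - ((c1/(t:ℝ)) * ⟪u t, z t⟫) • z t)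
        - (((if 0 < 1 + ⟪u t, zhat t⟫ then c2 else 0) / (t:ℝ)) • zhat t)‖
        ≤ ‖(1 - 1/(t:ℝ)) • u t - ((c1/(t:ℝ)) * ⟪u t, z t⟫) • z t‖
          + ‖((if 0 < 1 + ⟪u t, zhat t⟫ then c2 else 0) / (t:ℝ)) • zhat t‖ :=
      norm_sub_le _ _
    refine h1.trans ?_
    have hα : (0:ℝ) ≤ 1 - 1/(t:ℝ) := by
      have : 1/(t:ℝ) ≤ 1 := by rw [div_le_one htpos]; exact htR
      linarith
    have hγ : (0:ℝ) ≤ c1 / (t:ℝ) := by positivity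
    have hta : a ≤ (t:ℝ) - 1 := by
      have h1 : a ≤ (⌈a⌉₊ : ℝ) := Nat.le_ceil a
      have h2 : (N:ℝ) ≤ (t:ℝ) := by exact_mod_cast ht
      have h3 : ((⌈a⌉₊ : ℕ) : ℝ) + 1 = (N:ℝ) := by rw [hN]; push_cast; ring
      linarith
    have hcond : (c1/(t:ℝ)) * ‖z t‖ ^ 2 ≤ 2 * (1 - 1/(t:ℝ)) := by
      have hzt := hz t ht1
      have hz2 : ‖z t‖ ^ 2 ≤ M ^ 2 := by nlinarith [norm_nonneg (z t)]
      rw [div_mul_eq_mul_div, div_le_iff₀ htpos]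
      have : c1 * ‖z t‖ ^ 2 ≤ a := by rw [ha]; nlinarith
      have h2 : 2 * (1 - 1/(t:ℝ)) * (t:ℝ) = 2 * ((t:ℝ) - 1) := by
        field_simp
      rw [h2]; linarith
    have hcontr := sgtsvm_aux_contract (u t) (z t) (1 - 1/(t:ℝ)) (c1/(t:ℝ)) hα hγ hcond
    have h2 : ‖((if 0 < 1 + ⟪u t, zhat t⟫ then c2 else 0) / (t:ℝ)) • zhat t‖
        ≤ c2 * M / t := by
      rw [norm_smul, Real.norm_eq_abs]
      have hchi : |((if 0 < 1 + ⟪u t, zhat t⟫ then c2 else 0) : ℝ) / (t:ℝ)| ≤ c2 / t := by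
        rw [abs_div, abs_of_pos htpos]
        gcongr
        split <;> simp [abs_of_nonneg hc2.le, hc2.le]
      have hzh := hzhat t ht1
      have := mul_le_mul hchi hzh (norm_nonneg _) (by positivity)
      calc |((if 0 < 1 + ⟪u t, zhat t⟫ then c2 else 0) : ℝ)/(t:ℝ)| * ‖zhat t‖
          ≤ c2 / t * M := this
        _ = c2 * M / t := by ring
    linarith
  -- bound for t ≥ N by induction
  set K : ℝ := (2 + a) ^ N * C with hK
  set B : ℝ := max K (c2 * M) with hB
  have hKB : K ≤ B := le_max_left _ _
  have hcmB : c2 * M ≤ B := le_max_right _ _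
  have huN : ∀ t, 1 ≤ t → t ≤ N → ‖u t‖ ≤ K := by
    intro t ht htN
    have h1 := hexp t ht
    have h2 : (2+a)^t * C ≤ (2+a)^N * C := by
      have : (2+a)^t ≤ (2+a)^N := pow_le_pow_right₀ (by linarith) htN
      nlinarith
    rw [hK]; linarith
  have hupper : ∀ k : ℕ, ‖u (N + k)‖ ≤ B := by
    intro k
    induction k with
    | zero => simpa using le_trans (huN N hN1 le_rfl) hKB
    | succ n ih =>
      have htN : N ≤ N + n := Nat.le_add_right _ _
      have ht1 : 1 ≤ N + n := le_trans hN1 htN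
      have htR : (1:ℝ) ≤ ((N+n:ℕ):ℝ) := by exact_mod_cast ht1
      have htpos : (0:ℝ) < ((N+n:ℕ):ℝ) := by linarith
      have hk := hkey (N+n) htN
      have hα : (0:ℝ) ≤ 1 - 1/((N+n:ℕ):ℝ) := by
        have : 1/((N+n:ℕ):ℝ) ≤ 1 := by rw [div_le_one htpos]; exact htR
        linarith
      have h1 : (1 - 1/((N+n:ℕ):ℝ)) * ‖u (N+n)‖ ≤ (1 - 1/((N+n:ℕ):ℝ)) * B :=
        mul_le_mul_of_nonneg_left ih hα
      have h2 : c2 * M / ((N+n:ℕ):ℝ) ≤ B / ((N+n:ℕ):ℝ) := by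
        gcongr
      have h3 : (1 - 1/((N+n:ℕ):ℝ)) * B + B / ((N+n:ℕ):ℝ) = B := by
        field_simp
        ring
      have : N + (n+1) = (N + n) + 1 := by ring
      rw [this]
      linarith
  have hall : ∀ t, 1 ≤ t → ‖u t‖ ≤ B := by
    intro t ht
    rcases le_or_gt t N with h | h
    · exact le_trans (huN t ht h) hKB
    · have : t = N + (t - N) := by omega
      rw [this]; exact hupper (t - N)
  refine ⟨B, hall, ?_⟩
  intro t ht
  have h1 := hgrad t ht
  have h2 := hall t ht
  have hB0 : 0 ≤ B := le_trans (by positivity) hcmB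
  have : (1 + a) * ‖u t‖ ≤ (1 + a) * B := by nlinarith
  rw [ha] at this
  nlinarith [norm_nonneg (u t)]
end

section
/- Let f_t = f_{z_t,ẑ_t} for t = 1,…,T be instantaneous SGTSVM objectives, let (u_t) be generated by the SGTSVM iteration u_{t+1} = u_t − (1/t)∇_t where ∇_t is the subgradient vector of f_t at u_t, and suppose ‖u_t‖ ≤ G1 for all 1 ≤ t ≤ T+1 and ‖∇_t‖ ≤ G2 for all 1 ≤ t ≤ T. Let u* be a minimizer of the TWSVM objective f. Then (1/T)·Σ_{t=1}^T f_t(u_t) ≤ (1/T)·Σ_{t=1}^T f_t(u*) + G2(G1 + ‖u*‖) + (1/(2T))·G2²·(1 + ln T). -/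
/-!
Each instantaneous objective `f_t` is `1`-strongly convex and `∇_t` is a subgradient of it at `u_t`,
so `f_t u_t - f_t u* ≤ ⟪∇_t, u_t - u*⟫ - ‖u_t - u*‖² / 2`. With the step size `1 / t`, expanding
`‖u_{t+1} - u*‖²` rewrites `⟪∇_t, u_t - u*⟫` as `t / 2 · (‖u_t - u*‖² - ‖u_{t+1} - u*‖²) + ‖∇_t‖² / (2t)`,
and the strong-convexity term makes the distances telescope to `-T / 2 · ‖u_{T+1} - u*‖² ≤ 0`.
What is left is `∑ ‖∇_t‖² / (2t) ≤ G2² (1 + ln T) / 2`, by the harmonic-sum bound.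
-/

open RealInnerProductSpace Finset

variable {E : Type*} [NormedAddCommGroup E] [InnerProductSpace ℝ E]

noncomputable def sgtsvmObjective (c1 c2 : ℝ) (z zhat u : E) : ℝ :=
  (1 / 2) * ‖u‖ ^ 2 + (c1 / 2) * ⟪u, z⟫ ^ 2 + c2 * max 0 (1 + ⟪u, zhat⟫)

noncomputable def sgtsvmSubgradient (c1 c2 : ℝ) (z zhat u : E) : E :=
  u + (c1 * ⟪u, z⟫) • z + (if 0 < 1 + ⟪u, zhat⟫ then c2 else 0) • zhat

lemma half_mul_sq_sub_sq_le {c : ℝ} (hc : 0 ≤ c) (a b : ℝ) :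
    c / 2 * a ^ 2 - c / 2 * b ^ 2 ≤ c * a * (a - b) := by
  nlinarith [mul_nonneg hc (sq_nonneg (a - b))]

lemma mul_hinge_sub_le {c : ℝ} (hc : 0 ≤ c) (a b : ℝ) :
    c * max 0 (1 + a) - c * max 0 (1 + b) ≤ (if 0 < 1 + a then c else 0) * (a - b) := by
  split_ifs with h
  · rw [max_eq_right h.le]
    nlinarith [le_max_right 0 (1 + b)]
  · rw [max_eq_left (not_lt.mp h)]
    nlinarith [le_max_left 0 (1 + b)]

lemma half_norm_sq_sub_half_norm_sq (u v : E) :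
    1 / 2 * ‖u‖ ^ 2 - 1 / 2 * ‖v‖ ^ 2 = ⟪u, u - v⟫ - ‖u - v‖ ^ 2 / 2 := by
  rw [norm_sub_sq_real, inner_sub_right, real_inner_self_eq_norm_sq]
  ring

theorem sgtsvmObjective_sub_le {c1 c2 : ℝ} (hc1 : 0 ≤ c1) (hc2 : 0 ≤ c2) (z zhat u v : E) :
    sgtsvmObjective c1 c2 z zhat u - sgtsvmObjective c1 c2 z zhat v
      ≤ ⟪sgtsvmSubgradient c1 c2 z zhat u, u - v⟫ - ‖u - v‖ ^ 2 / 2 := by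
  have hinner : ⟪sgtsvmSubgradient c1 c2 z zhat u, u - v⟫ = ⟪u, u - v⟫
      + c1 * ⟪u, z⟫ * (⟪u, z⟫ - ⟪v, z⟫)
      + (if 0 < 1 + ⟪u, zhat⟫ then c2 else 0) * (⟪u, zhat⟫ - ⟪v, zhat⟫) := by
    simp only [sgtsvmSubgradient, inner_add_left, real_inner_smul_left, inner_sub_right,
      real_inner_comm z, real_inner_comm zhat]
    ring
  rw [hinner]
  unfold sgtsvmObjective
  linarith [half_norm_sq_sub_half_norm_sq u v, half_mul_sq_sub_sq_le hc1 ⟪u, z⟫ ⟪v, z⟫,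
    mul_hinge_sub_le hc2 ⟪u, zhat⟫ ⟪v, zhat⟫]

lemma inner_sub_eq_of_step {η : ℝ} (hη : η ≠ 0) {u u' g : E} (h : u' = u - η • g) (v : E) :
    ⟪g, u - v⟫ = (‖u - v‖ ^ 2 - ‖u' - v‖ ^ 2) / (2 * η) + η / 2 * ‖g‖ ^ 2 := by
  have hdist : ‖u' - v‖ ^ 2 = ‖u - v‖ ^ 2 - 2 * η * ⟪g, u - v⟫ + η ^ 2 * ‖g‖ ^ 2 := by
    rw [h, sub_right_comm, norm_sub_sq_real, real_inner_smul_right, norm_smul, mul_pow,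
      Real.norm_eq_abs, sq_abs, real_inner_comm]
    ring
  rw [hdist]
  field_simp
  ring

lemma sum_Icc_mul_sub_sub_eq (D : ℕ → ℝ) (T : ℕ) :
    ∑ t ∈ Icc 1 T, ((t : ℝ) * (D t - D (t + 1)) - D t) = -(T * D (T + 1)) := by
  induction T with
  | zero => simp
  | succ T ih =>
    rw [sum_Icc_succ_top (by omega), ih]
    push_cast
    ring

lemma sum_Icc_inv_le_one_add_log (T : ℕ) : ∑ t ∈ Icc 1 T, ((t : ℝ))⁻¹ ≤ 1 + Real.log T := by
  have h := harmonic_le_one_add_log T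
  simpa only [harmonic_eq_sum_Icc, Rat.cast_sum, Rat.cast_inv, Rat.cast_natCast] using h

theorem sum_sub_le_of_strongly_convex_of_step_inv {f : ℕ → E → ℝ} {u g : ℕ → E} {v : E} {T : ℕ}
    (hsub : ∀ t, 1 ≤ t → t ≤ T → f t (u t) - f t v ≤ ⟪g t, u t - v⟫ - ‖u t - v‖ ^ 2 / 2)
    (hstep : ∀ t, 1 ≤ t → t ≤ T → u (t + 1) = u t - (1 / (t : ℝ)) • g t) :
    ∑ t ∈ Icc 1 T, (f t (u t) - f t v) ≤ ∑ t ∈ Icc 1 T, ‖g t‖ ^ 2 / (2 * t) := by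
  set D : ℕ → ℝ := fun t ↦ ‖u t - v‖ ^ 2
  have hterm : ∀ t ∈ Icc 1 T, f t (u t) - f t v
      ≤ ((t : ℝ) * (D t - D (t + 1)) - D t) / 2 + ‖g t‖ ^ 2 / (2 * t) := by
    intro t ht
    obtain ⟨ht1, htT⟩ := mem_Icc.mp ht
    have ht0 : (t : ℝ) ≠ 0 := by positivity
    have h := inner_sub_eq_of_step (one_div_ne_zero ht0) (hstep t ht1 htT) v
    have hsubt := hsub t ht1 htT
    rw [h] at hsubt
    convert hsubt using 1
    field_simp
    ring
  calc ∑ t ∈ Icc 1 T, (f t (u t) - f t v)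
      ≤ ∑ t ∈ Icc 1 T, (((t : ℝ) * (D t - D (t + 1)) - D t) / 2 + ‖g t‖ ^ 2 / (2 * t)) :=
        sum_le_sum hterm
    _ = -(T * D (T + 1)) / 2 + ∑ t ∈ Icc 1 T, ‖g t‖ ^ 2 / (2 * t) := by
        rw [sum_add_distrib, ← sum_div, sum_Icc_mul_sub_sub_eq]
    _ ≤ ∑ t ∈ Icc 1 T, ‖g t‖ ^ 2 / (2 * t) := by
        have : 0 ≤ (T : ℝ) * D (T + 1) := by positivity
        linarith

lemma sum_sq_norm_div_le_log {g : ℕ → E} {G : ℝ} {T : ℕ}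
    (hg : ∀ t, 1 ≤ t → t ≤ T → ‖g t‖ ≤ G) :
    ∑ t ∈ Icc 1 T, ‖g t‖ ^ 2 / (2 * t) ≤ G ^ 2 / 2 * (1 + Real.log T) :=
  calc ∑ t ∈ Icc 1 T, ‖g t‖ ^ 2 / (2 * t)
      ≤ ∑ t ∈ Icc 1 T, G ^ 2 / 2 * ((t : ℝ))⁻¹ := by
        gcongr with t ht
        rw [div_mul_eq_div_div, div_eq_mul_inv]
        gcongr
        exact hg t (mem_Icc.mp ht).1 (mem_Icc.mp ht).2
    _ ≤ G ^ 2 / 2 * (1 + Real.log T) := by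
        rw [← mul_sum]
        gcongr
        exact sum_Icc_inv_le_one_add_log T

theorem sgtsvm_average_objective_bound_general
    (d T : ℕ) (hT : 1 ≤ T)
    (c1 c2 : ℝ) (hc1 : 0 < c1) (hc2 : 0 < c2)
    (z zhat : ℕ → EuclideanSpace ℝ (Fin d))
    -- the instantaneous SGTSVM objectives f_t = f_{z_t, ẑ_t}
    (f : ℕ → EuclideanSpace ℝ (Fin d) → ℝ)
    (hf : ∀ t x, f t x = (1 / 2) * ‖x‖ ^ 2 + (c1 / 2) * ⟪x, z t⟫ ^ 2
        + c2 * max 0 (1 + ⟪x, zhat t⟫))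
    -- the SGTSVM iteration with the subgradient vector ∇_t of f_t at u_t
    (u g : ℕ → EuclideanSpace ℝ (Fin d))
    (hg : ∀ t, 1 ≤ t → t ≤ T →
      g t = u t + (c1 * ⟪u t, z t⟫) • z t
        + (if 0 < 1 + ⟪u t, zhat t⟫ then c2 else 0) • zhat t)
    (hstep : ∀ t, 1 ≤ t → t ≤ T → u (t + 1) = u t - (1 / (t : ℝ)) • g t)
    (G1 G2 : ℝ)
    (hu : ∀ t, 1 ≤ t → t ≤ T + 1 → ‖u t‖ ≤ G1)
    (hgb : ∀ t, 1 ≤ t → t ≤ T → ‖g t‖ ≤ G2)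
    (ustar : EuclideanSpace ℝ (Fin d)) :
    (1 / (T : ℝ)) * ∑ t ∈ Finset.Icc 1 T, f t (u t)
      ≤ (1 / (T : ℝ)) * ∑ t ∈ Finset.Icc 1 T, f t ustar
        + G2 * (G1 + ‖ustar‖) + (1 / (2 * (T : ℝ))) * G2 ^ 2 * (1 + Real.log T) := by
  have hG1 : 0 ≤ G1 := (norm_nonneg _).trans (hu 1 le_rfl (by omega))
  have hG2 : 0 ≤ G2 := (norm_nonneg _).trans (hgb 1 le_rfl hT)
  have hsub : ∀ t, 1 ≤ t → t ≤ T →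
      f t (u t) - f t ustar ≤ ⟪g t, u t - ustar⟫ - ‖u t - ustar‖ ^ 2 / 2 := fun t ht1 htT ↦ by
    rw [hf, hf, hg t ht1 htT]
    exact sgtsvmObjective_sub_le hc1.le hc2.le (z t) (zhat t) (u t) ustar
  have hregret : ∑ t ∈ Icc 1 T, f t (u t) - ∑ t ∈ Icc 1 T, f t ustar
      ≤ G2 ^ 2 / 2 * (1 + Real.log T) := by
    rw [← sum_sub_distrib]
    exact (sum_sub_le_of_strongly_convex_of_step_inv hsub hstep).trans
      (sum_sq_norm_div_le_log hgb)
  have hslack : 0 ≤ G2 * (G1 + ‖ustar‖) := by positivity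
  calc (1 / (T : ℝ)) * ∑ t ∈ Icc 1 T, f t (u t)
      = 1 / T * ∑ t ∈ Icc 1 T, f t ustar
        + 1 / T * (∑ t ∈ Icc 1 T, f t (u t) - ∑ t ∈ Icc 1 T, f t ustar) := by ring
    _ ≤ 1 / T * ∑ t ∈ Icc 1 T, f t ustar + 1 / T * (G2 ^ 2 / 2 * (1 + Real.log T)) := by
        gcongr
    _ ≤ 1 / T * ∑ t ∈ Icc 1 T, f t ustar
        + G2 * (G1 + ‖ustar‖) + 1 / (2 * T) * G2 ^ 2 * (1 + Real.log T) := by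
        ring_nf
        linarith

/-- Theorem 3.2(i): the average instantaneous SGTSVM objective at the iterates is
bounded in terms of its value at a minimizer `u*` of the TWSVM objective. -/
theorem sgtsvm_average_objective_bound
    (d m1 m2 T : ℕ) (hm1 : 0 < m1) (hm2 : 0 < m2) (hT : 1 ≤ T)
    (c1 c2 : ℝ) (hc1 : 0 < c1) (hc2 : 0 < c2)
    (Z1 : Fin m1 → EuclideanSpace ℝ (Fin d)) (Z2 : Fin m2 → EuclideanSpace ℝ (Fin d))
    (z zhat : ℕ → EuclideanSpace ℝ (Fin d))
    (hzmem : ∀ t, 1 ≤ t → t ≤ T → ∃ i, z t = Z1 i)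
    (hzhmem : ∀ t, 1 ≤ t → t ≤ T → ∃ j, zhat t = Z2 j)
    -- the instantaneous SGTSVM objectives f_t = f_{z_t, ẑ_t}
    (f : ℕ → EuclideanSpace ℝ (Fin d) → ℝ)
    (hf : ∀ t x, f t x = (1 / 2) * ‖x‖ ^ 2 + (c1 / 2) * ⟪x, z t⟫ ^ 2
        + c2 * max 0 (1 + ⟪x, zhat t⟫))
    -- the SGTSVM iteration with the subgradient vector ∇_t of f_t at u_t
    (u g : ℕ → EuclideanSpace ℝ (Fin d))
    (hg : ∀ t, 1 ≤ t → t ≤ T →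
      g t = u t + (c1 * ⟪u t, z t⟫) • z t
        + (if 0 < 1 + ⟪u t, zhat t⟫ then c2 else 0) • zhat t)
    (hstep : ∀ t, 1 ≤ t → t ≤ T → u (t + 1) = u t - (1 / (t : ℝ)) • g t)
    (G1 G2 : ℝ)
    (hu : ∀ t, 1 ≤ t → t ≤ T + 1 → ‖u t‖ ≤ G1)
    (hgb : ∀ t, 1 ≤ t → t ≤ T → ‖g t‖ ≤ G2)
    -- the TWSVM objective and its minimizer u*
    (F : EuclideanSpace ℝ (Fin d) → ℝ)
    (hF : ∀ x, F x = (1 / 2) * ‖x‖ ^ 2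
        + (c1 / (2 * (m1 : ℝ))) * ∑ i, ⟪x, Z1 i⟫ ^ 2
        + (c2 / (m2 : ℝ)) * ∑ j, max 0 (1 + ⟪x, Z2 j⟫))
    (ustar : EuclideanSpace ℝ (Fin d)) (hmin : ∀ x, F ustar ≤ F x) :
    (1 / (T : ℝ)) * ∑ t ∈ Finset.Icc 1 T, f t (u t)
      ≤ (1 / (T : ℝ)) * ∑ t ∈ Finset.Icc 1 T, f t ustar
        + G2 * (G1 + ‖ustar‖) + (1 / (2 * (T : ℝ))) * G2 ^ 2 * (1 + Real.log T) :=
  sgtsvm_average_objective_bound_general d T hT c1 c2 hc1 hc2 z zhat f hf u g hg hstep G1 G2 hu hgb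
    ustar
end

section
/- Let f_1,…,f_T : ℝ^d → ℝ, let (u_t)_{t=1}^{T} satisfy u_{t+1} = u_t − (1/t)∇_t with ‖∇_t‖ ≤ G2 for all 1 ≤ t ≤ T−1, and suppose |f_t(u_T) − f_t(u_t)| ≤ G2·‖u_T − u_t‖ for every 1 ≤ t ≤ T. If f : ℝ^d → ℝ satisfies f(u) = (1/T)·Σ_{t=1}^T f_t(u) for all u, then f(u_T) ≤ (1/T)·Σ_{t=1}^T f_t(u_t) + G2²·(T−1)/T. -/
/-!
With step sizes `1/s`, the iterate drifts by at most `G2 · ∑_{s=t}^{T-1} 1/s` between times `t`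
and `T`, so Lipschitz continuity costs at most `G2² · ∑_{s=t}^{T-1} 1/s` in the `t`-th term.
Summed over `t`, each `1/s` is counted exactly `s` times, so the total cost is `G2² (T - 1)`.
-/

open Finset

theorem norm_sub_le_mul_sum_inv_of_step {E : Type*} [SeminormedAddCommGroup E]
    [NormedSpace ℝ E] {u g : ℕ → E} {G : ℝ} {t k : ℕ} (htk : t ≤ k)
    (hstep : ∀ s, t ≤ s → s < k → u (s + 1) = u s - (s : ℝ)⁻¹ • g s)
    (hg : ∀ s, t ≤ s → s < k → ‖g s‖ ≤ G) :
    ‖u k - u t‖ ≤ G * ∑ s ∈ Ico t k, (s : ℝ)⁻¹ := by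
  rw [← dist_eq_norm, dist_comm, mul_sum]
  refine dist_le_Ico_sum_of_dist_le htk fun {s} hts hsk => ?_
  rw [dist_eq_norm, hstep s hts hsk, sub_sub_cancel, norm_smul, norm_inv, Real.norm_natCast,
    mul_comm]
  exact mul_le_mul_of_nonneg_right (hg s hts hsk) (inv_nonneg.2 s.cast_nonneg)

theorem le_add_sq_mul_of_abs_sub_le_mul {a b G r S : ℝ} (hab : |a - b| ≤ G * r) (hr : 0 ≤ r)
    (hrS : r ≤ G * S) (hS : 0 ≤ S) : a ≤ b + G ^ 2 * S := by
  have hGr : G * r ≤ G ^ 2 * S := by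
    rcases le_or_gt 0 G with hG | hG
    · calc G * r ≤ G * (G * S) := mul_le_mul_of_nonneg_left hrS hG
        _ = G ^ 2 * S := by ring
    · exact (mul_nonpos_of_nonpos_of_nonneg hG.le hr).trans (by positivity)
  linarith [le_abs_self (a - b)]

theorem sum_Icc_sum_Ico_inv {T : ℕ} (hT : 1 ≤ T) :
    ∑ t ∈ Icc 1 T, ∑ s ∈ Ico t T, (s : ℝ)⁻¹ = T - 1 := by
  rw [sum_comm' (t' := Ico 1 T) (s' := fun s => Icc 1 s) fun t s => by
    simp only [mem_Icc, mem_Ico]; omega]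
  have hinner : ∀ s ∈ Ico 1 T, ∑ _t ∈ Icc 1 s, (s : ℝ)⁻¹ = 1 := fun s hs => by
    have hs : (s : ℝ) ≠ 0 := by have := (mem_Ico.1 hs).1; positivity
    rw [sum_const, Nat.card_Icc, Nat.add_sub_cancel, nsmul_eq_mul, mul_inv_cancel₀ hs]
  rw [sum_congr rfl hinner, sum_const, Nat.card_Ico, nsmul_one, Nat.cast_sub hT, Nat.cast_one]

/-- If `f = (1/T)Σ f_t`, the iterates satisfy `u_{t+1} = u_t − (1/t)∇_t` with
`‖∇_t‖ ≤ G2`, and each `f_t` is `G2`-Lipschitz between `u_T` and `u_t`, then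
`f(u_T) ≤ (1/T)Σ f_t(u_t) + G2²(T−1)/T`. -/
theorem twsvm_final_iterate_objective_bound
    (d T : ℕ) (hT : 1 ≤ T)
    (f : ℕ → EuclideanSpace ℝ (Fin d) → ℝ) (F : EuclideanSpace ℝ (Fin d) → ℝ)
    (u g : ℕ → EuclideanSpace ℝ (Fin d)) (G2 : ℝ)
    (hstep : ∀ t, 1 ≤ t → t ≤ T - 1 → u (t + 1) = u t - (1 / (t : ℝ)) • g t)
    (hg : ∀ t, 1 ≤ t → t ≤ T - 1 → ‖g t‖ ≤ G2)
    (hLip : ∀ t, 1 ≤ t → t ≤ T → |f t (u T) - f t (u t)| ≤ G2 * ‖u T - u t‖)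
    (hF : ∀ x, F x = (1 / (T : ℝ)) * ∑ t ∈ Finset.Icc 1 T, f t x) :
    F (u T) ≤ (1 / (T : ℝ)) * ∑ t ∈ Finset.Icc 1 T, f t (u t)
      + G2 ^ 2 * ((T : ℝ) - 1) / T := by
  have hterm : ∀ t ∈ Icc 1 T,
      f t (u T) ≤ f t (u t) + G2 ^ 2 * ∑ s ∈ Ico t T, (s : ℝ)⁻¹ := fun t ht => by
    obtain ⟨h1t, htT⟩ := mem_Icc.1 ht
    have hdrift := norm_sub_le_mul_sum_inv_of_step htT
      (fun s hts hsT => by simpa only [one_div] using hstep s (by omega) (by omega))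
      (fun s hts hsT => hg s (by omega) (by omega))
    exact le_add_sq_mul_of_abs_sub_le_mul (hLip t h1t htT) (norm_nonneg _) hdrift
      (sum_nonneg fun s _ => inv_nonneg.2 s.cast_nonneg)
  have hsum := sum_le_sum hterm
  rw [sum_add_distrib, ← mul_sum, sum_Icc_sum_Ico_inv hT] at hsum
  rw [hF]
  calc (1 / (T : ℝ)) * ∑ t ∈ Icc 1 T, f t (u T)
      ≤ (1 / (T : ℝ)) * (∑ t ∈ Icc 1 T, f t (u t) + G2 ^ 2 * ((T : ℝ) - 1)) := by gcongr
    _ = (1 / (T : ℝ)) * ∑ t ∈ Icc 1 T, f t (u t) + G2 ^ 2 * ((T : ℝ) - 1) / T := by ring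
end
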